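/- arXiv:2408.09904 — 5 statements merged into one kernel-verified Lean document; each statement's English description precedes it below -/
import Mathlib

section
/- For all real c_S in [1/2, 1), all real h in (0,1), and all natural numbers q ≥ 2, we have c_S^(q-1) - c_S^(2q-1) + h^q·(1-c_S)^(2q-1) - h^q·(1-c_S)^(q-1) > 0. -/
theorem stmt_0 (cS h : ℝ) (q : ℕ) (hcS1 : 1/2 ≤ cS) (hcS2 : cS < 1)
    (hh1 : 0 < h) (hh2 : h < 1) (hq : 2 ≤ q) :
    0 < cS^(q-1) - cS^(2*q-1) + h^q * (1-cS)^(2*q-1) - h^q * (1-cS)^(q-1) := by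
  obtain ⟨k, rfl⟩ : ∃ k, q = k + 2 := ⟨q - 2, by omega⟩
  set y : ℝ := 1 - cS with hy
  have hy0 : 0 < y := by rw [hy]; linarith
  have hyx : y ≤ cS := by rw [hy]; linarith
  have hx0 : (0:ℝ) < cS := by linarith
  have e1 : k + 2 - 1 = k + 1 := rfl
  have e2 : 2 * (k + 2) - 1 = (k + 1) + (k + 2) := by omega
  rw [e1, e2]
  set Sx : ℝ := ∑ i ∈ Finset.range (k+2), cS ^ i with hSx
  set Sy : ℝ := ∑ i ∈ Finset.range (k+2), y ^ i with hSy
  have hgx : 1 - cS ^ (k+2) = y * Sx := by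
    have := geom_sum_mul cS (k+2)
    rw [hSx, hy]; nlinarith [this]
  have hgy : 1 - y ^ (k+2) = cS * Sy := by
    have := geom_sum_mul y (k+2)
    have hxy : cS = 1 - y := by rw [hy]; ring
    rw [hSy, hxy]; nlinarith [this]
  have hB : cS ^ (k+1) - cS ^ ((k+1)+(k+2)) = cS ^ (k+1) * (y * Sx) := by
    rw [← hgx]; ring
  have hA : y ^ (k+1) - y ^ ((k+1)+(k+2)) = y ^ (k+1) * (cS * Sy) := by
    rw [← hgy]; ring
  have hSxy : Sy ≤ Sx := by
    apply Finset.sum_le_sum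
    intro i _
    exact pow_le_pow_left₀ hy0.le hyx i
  have hSy0 : 0 < Sy := by
    apply Finset.sum_pos
    · intro i _; positivity
    · exact ⟨0, Finset.mem_range.mpr (by omega)⟩
  have hAB : y ^ (k+1) * (cS * Sy) ≤ cS ^ (k+1) * (y * Sx) := by
    have h1 : y ^ k ≤ cS ^ k := pow_le_pow_left₀ hy0.le hyx k
    have h2 : y ^ k * Sy ≤ cS ^ k * Sx := by
      apply mul_le_mul h1 hSxy hSy0.le (by positivity)
    calc y ^ (k+1) * (cS * Sy) = (cS * y) * (y ^ k * Sy) := by ring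
      _ ≤ (cS * y) * (cS ^ k * Sx) := by
          apply mul_le_mul_of_nonneg_left h2 (by positivity)
      _ = cS ^ (k+1) * (y * Sx) := by ring
  have hA0 : 0 < y ^ (k+1) * (cS * Sy) := by positivity
  have hhq : h ^ (k+2) < 1 := pow_lt_one₀ hh1.le hh2 (by omega)
  have hfin : h ^ (k+2) * (y ^ (k+1) * (cS * Sy)) < cS ^ (k+1) * (y * Sx) :=
    lt_of_lt_of_le (by nlinarith) hAB
  nlinarith [hfin, hA, hB]
end

section
/- Define f_2(c_S) = c_S(1-c_S)(c_S^(2q-1) - h^q (1-c_S)^(2q-1)), f_3(c_S) = (c_S - 1/2)·(c_S + h - c_S·h)^q, and f_4(c_S) = f_2(c_S)/(f_2(c_S)+f_3(c_S)), for h in (0,1) and natural q ≥ 2. Then f_4(1) = 0, f_4(1/2) = 1, and f_4(c_S) ∈ (0,1) for all c_S in (1/2, 1). -/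
lemma mul_pow_lt_pow_of_le {a x y : ℝ} (n : ℕ) (ha₀ : 0 ≤ a) (ha₁ : a < 1) (hx : 0 ≤ x)
    (hxy : x ≤ y) (hy : 0 < y) : a * x ^ n < y ^ n :=
  calc a * x ^ n ≤ a * y ^ n := by gcongr
    _ < y ^ n := mul_lt_of_lt_one_left (pow_pos hy n) ha₁

lemma div_add_mem_Ioo_of_pos {a b : ℝ} (ha : 0 < a) (hb : 0 < b) :
    a / (a + b) ∈ Set.Ioo 0 1 :=
  ⟨by positivity, (div_lt_one (by positivity)).2 (by linarith)⟩

lemma mul_one_sub_mul_sub_pos {a c : ℝ} (n : ℕ) (ha₀ : 0 ≤ a) (ha₁ : a < 1) (hc₀ : 1 / 2 ≤ c)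
    (hc₁ : c < 1) : 0 < c * (1 - c) * (c ^ n - a * (1 - c) ^ n) :=
  mul_pos (mul_pos (by linarith) (by linarith))
    (sub_pos.2 (mul_pow_lt_pow_of_le n ha₀ ha₁ (by linarith) (by linarith) (by linarith)))

theorem stmt_9 (h : ℝ) (q : ℕ) (hh1 : 0 < h) (hh2 : h < 1) (hq : 2 ≤ q)
    (f2 f3 f4 : ℝ → ℝ)
    (hf2 : ∀ cS, f2 cS = cS * (1-cS) * (cS^(2*q-1) - h^q * (1-cS)^(2*q-1)))
    (hf3 : ∀ cS, f3 cS = (cS - 1/2) * (cS + h - cS*h)^q)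
    (hf4 : ∀ cS, f4 cS = f2 cS / (f2 cS + f3 cS)) :
    f4 1 = 0 ∧ f4 (1/2) = 1 ∧ ∀ cS ∈ Set.Ioo (1/2 : ℝ) 1, f4 cS ∈ Set.Ioo (0:ℝ) 1 := by
  have hhq₀ : 0 ≤ h ^ q := by positivity
  have hhq₁ : h ^ q < 1 := pow_lt_one₀ hh1.le hh2 (by omega)
  refine ⟨by simp [hf4, hf2], ?_, fun cS ⟨hc₀, hc₁⟩ => ?_⟩
  · have hf2_pos : 0 < f2 (1 / 2) := by
      rw [hf2]; exact mul_one_sub_mul_sub_pos _ hhq₀ hhq₁ le_rfl (by norm_num)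
    rw [hf4, hf3, sub_self, zero_mul, add_zero, div_self hf2_pos.ne']
  · rw [hf4]
    refine div_add_mem_Ioo_of_pos ?_ ?_
    · rw [hf2]; exact mul_one_sub_mul_sub_pos _ hhq₀ hhq₁ hc₀.le hc₁
    · have hbase : 0 < cS + h - cS * h := by nlinarith
      rw [hf3]; exact mul_pos (by linarith) (pow_pos hbase q)
end

section
/- Let h be in (0,1) and q a natural number ≥ 2. Define f_2(c_S) = c_S(1-c_S)(c_S^(2q-1) - h^q (1-c_S)^(2q-1)) and f_3(c_S) = (c_S - 1/2)·(c_S + h - c_S·h)^q. Then for every p in [0,1] there exists c_S in [1/2, 1] such that p·(f_2(c_S) + f_3(c_S)) = f_2(c_S). -/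
theorem stmt_10 (h : ℝ) (q : ℕ) (hh1 : 0 < h) (hh2 : h < 1) (hq : 2 ≤ q)
    (p : ℝ) (hp1 : 0 ≤ p) (hp2 : p ≤ 1) :
    ∃ cS ∈ Set.Icc (1/2 : ℝ) 1,
      p * (cS * (1-cS) * (cS^(2*q-1) - h^q * (1-cS)^(2*q-1))
            + (cS - 1/2) * (cS + h - cS*h)^q)
        = cS * (1-cS) * (cS^(2*q-1) - h^q * (1-cS)^(2*q-1)) := by
  set g : ℝ → ℝ := fun c =>
    p * (c * (1-c) * (c^(2*q-1) - h^q * (1-c)^(2*q-1))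
          + (c - 1/2) * (c + h - c*h)^q)
      - c * (1-c) * (c^(2*q-1) - h^q * (1-c)^(2*q-1)) with hg
  have hcont : ContinuousOn g (Set.Icc (1/2 : ℝ) 1) := by
    apply Continuous.continuousOn
    fun_prop
  have hle : (1/2 : ℝ) ≤ 1 := by norm_num
  have hhalf : g (1/2) ≤ 0 := by
    have hhq : h^q ≤ 1 := pow_le_one₀ hh1.le hh2.le
    have hpos : (0:ℝ) ≤ (1/2:ℝ)^(2*q-1) := by positivity
    have heq : g (1/2) = ((1/2:ℝ)^(2*q-1)) * (1 - h^q) * (p - 1) / 4 := by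
      simp only [hg]; ring
    rw [heq]
    nlinarith [mul_nonneg hpos (sub_nonneg.2 hhq)]
  have hone : 0 ≤ g 1 := by
    have heq : g 1 = p / 2 := by simp only [hg]; ring
    rw [heq]; linarith
  have := intermediate_value_Icc hle hcont
  have h0 : (0:ℝ) ∈ Set.Icc (g (1/2)) (g 1) := ⟨hhalf, hone⟩
  obtain ⟨cS, hcS, hval⟩ := this h0
  refine ⟨cS, hcS, ?_⟩
  simp only [hg] at hval
  linarith
end

section
/- Let h be in (0,1) and q a natural number ≥ 2. Define f_5(c_S) = c_S(1-c_S)·[ (c_S^(q-1) - (1-c_S)^(q-1))·(c_S + h - c_S·h)^q + c_S^(q-1)(1-c_S)^(q-1)(1+h^q)(2c_S - 1) + c_S^(q-1) - c_S^(2q-1) + h^q(1-c_S)^(2q-1) - h^q(1-c_S)^(q-1) ]. Then f_5(c_S) > 0 for all c_S in [1/2, 1). -/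
theorem stmt_11 (h : ℝ) (q : ℕ) (hh1 : 0 < h) (hh2 : h < 1) (hq : 2 ≤ q)
    (cS : ℝ) (hcS1 : 1/2 ≤ cS) (hcS2 : cS < 1) :
    0 < cS * (1-cS) *
      ((cS^(q-1) - (1-cS)^(q-1)) * (cS + h - cS*h)^q
        + cS^(q-1) * (1-cS)^(q-1) * (1 + h^q) * (2*cS - 1)
        + cS^(q-1) - cS^(2*q-1) + h^q * (1-cS)^(2*q-1) - h^q * (1-cS)^(q-1)) := by
  set t := 1 - cS with ht_def
  have ht0 : 0 < t := by rw [ht_def]; linarith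
  have hc0 : 0 < cS := by linarith
  have htc : t ≤ cS := by rw [ht_def]; linarith
  have hhq : (0:ℝ) < h^q := by positivity
  -- first summand nonnegative
  have hA : 0 ≤ (cS^(q-1) - t^(q-1)) * (cS + h - cS*h)^q := by
    apply mul_nonneg
    · have := pow_le_pow_left₀ ht0.le htc (q-1); linarith
    · apply pow_nonneg; nlinarith
  -- second summand nonnegative
  have hB : 0 ≤ cS^(q-1) * t^(q-1) * (1 + h^q) * (2*cS - 1) := by
    apply mul_nonneg (by positivity); linarith
  -- geometric sum factorization
  have hgeom : ∀ x : ℝ, 1 - x^q = (1-x) * ∑ i ∈ Finset.range q, x^i := by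
    intro x
    linear_combination geom_sum_mul x q
  set Sc := ∑ i ∈ Finset.range q, cS^i with hSc_def
  set St := ∑ i ∈ Finset.range q, t^i with hSt_def
  have h2q : 2*q-1 = (q-1) + q := by omega
  have h1q : q - 1 = (q-2) + 1 := by omega
  have hgc : cS^(q-1) - cS^(2*q-1) = cS^(q-1) * t * Sc := by
    rw [h2q, pow_add, hSc_def, ht_def]
    linear_combination cS^(q-1) * hgeom cS
  have hgt : t^(q-1) - t^(2*q-1) = t^(q-1) * cS * St := by
    rw [h2q, pow_add, hSt_def, ht_def]
    linear_combination (1-cS)^(q-1) * hgeom (1-cS)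
  -- key comparison
  have hSt0 : 0 ≤ St := by
    rw [hSt_def]; apply Finset.sum_nonneg; intro i _; positivity
  have hStSc : St ≤ Sc := by
    rw [hSt_def, hSc_def]
    apply Finset.sum_le_sum
    intro i _
    exact pow_le_pow_left₀ ht0.le htc i
  have hkey : t^(q-1) * cS * St ≤ cS^(q-1) * t * Sc := by
    rw [h1q, pow_succ, pow_succ]
    have h1 : t^(q-2) * St ≤ cS^(q-2) * Sc :=
      mul_le_mul (pow_le_pow_left₀ ht0.le htc (q-2)) hStSc hSt0 (by positivity)
    nlinarith [h1, mul_pos hc0 ht0]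
  have hGt0 : 0 < t^(q-1) * cS * St := by
    apply mul_pos (mul_pos (by positivity) hc0)
    rw [hSt_def]
    apply Finset.sum_pos
    · intro i _; positivity
    · exact Finset.nonempty_range_iff.mpr (by omega)
  have hhq1 : h^q < 1 := pow_lt_one₀ hh1.le hh2 (by omega)
  -- tail strictly positive
  have hL : 0 < cS^(q-1) - cS^(2*q-1) + h^q * t^(2*q-1) - h^q * t^(q-1) := by
    have e1 : h^q * t^(q-1) - h^q * t^(2*q-1) = h^q * (t^(q-1) * cS * St) := by
      rw [← hgt]; ring
    have e2 : h^q * (t^(q-1) * cS * St) < t^(q-1) * cS * St := by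
      nlinarith [hGt0]
    nlinarith [hgc, hkey]
  apply mul_pos (mul_pos hc0 ht0)
  linarith
end

section
/- Let h be in (0,1) and q a natural number ≥ 2. Define f_5 as in the OR-variant analysis and f_3(c_S) = (c_S - 1/2)·(c_S + h - c_S·h)^q. Then for every p in [0,1] there exists c_S in [1/2, 1] such that p·(f_5(c_S) + f_3(c_S)) = f_5(c_S). -/
theorem stmt_12 (h : ℝ) (q : ℕ) (hh1 : 0 < h) (hh2 : h < 1) (hq : 2 ≤ q)
    (p : ℝ) (hp1 : 0 ≤ p) (hp2 : p ≤ 1) :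
    ∃ cS ∈ Set.Icc (1/2 : ℝ) 1,
      p * (cS * (1-cS) *
            ((cS^(q-1) - (1-cS)^(q-1)) * (cS + h - cS*h)^q
              + cS^(q-1) * (1-cS)^(q-1) * (1 + h^q) * (2*cS - 1)
              + cS^(q-1) - cS^(2*q-1) + h^q * (1-cS)^(2*q-1) - h^q * (1-cS)^(q-1))
            + (cS - 1/2) * (cS + h - cS*h)^q)
        = cS * (1-cS) *
            ((cS^(q-1) - (1-cS)^(q-1)) * (cS + h - cS*h)^q
              + cS^(q-1) * (1-cS)^(q-1) * (1 + h^q) * (2*cS - 1)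
              + cS^(q-1) - cS^(2*q-1) + h^q * (1-cS)^(2*q-1) - h^q * (1-cS)^(q-1)) := by
  set F : ℝ → ℝ := fun cS =>
      (cS * (1-cS) *
            ((cS^(q-1) - (1-cS)^(q-1)) * (cS + h - cS*h)^q
              + cS^(q-1) * (1-cS)^(q-1) * (1 + h^q) * (2*cS - 1)
              + cS^(q-1) - cS^(2*q-1) + h^q * (1-cS)^(2*q-1) - h^q * (1-cS)^(q-1)))
        - p * (cS * (1-cS) *
            ((cS^(q-1) - (1-cS)^(q-1)) * (cS + h - cS*h)^q
              + cS^(q-1) * (1-cS)^(q-1) * (1 + h^q) * (2*cS - 1)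
              + cS^(q-1) - cS^(2*q-1) + h^q * (1-cS)^(2*q-1) - h^q * (1-cS)^(q-1))
            + (cS - 1/2) * (cS + h - cS*h)^q) with hFdef
  have hcont : ContinuousOn F (Set.Icc (1/2:ℝ) 1) := by fun_prop
  have hF1 : F 1 ≤ 0 := by
    have e : (1 + h - 1*h : ℝ) = 1 := by ring
    simp only [hFdef, e, one_pow]
    nlinarith
  have hFhalf : 0 ≤ F (1/2) := by
    have hle : ((1:ℝ)/2)^(2*q-1) ≤ (1/2)^(q-1) := by
      apply pow_le_pow_of_le_one (by norm_num) (by norm_num)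
      omega
    have hhq : h^q ≤ 1 := pow_le_one₀ hh1.le hh2.le
    have key : 0 ≤ (1-p) * (((1:ℝ)/2)^(q-1) - (1/2)^(2*q-1)) * (1 - h^q) :=
      mul_nonneg (mul_nonneg (by linarith) (by linarith)) (by linarith)
    simp only [hFdef]
    norm_num
    nlinarith [key]
  obtain ⟨cS, hcS, hFcS⟩ :=
    intermediate_value_Icc' (by norm_num : (1/2:ℝ) ≤ 1) hcont ⟨hF1, hFhalf⟩
  refine ⟨cS, hcS, ?_⟩
  simp only [hFdef] at hFcS
  linarith
end
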